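/- arXiv:2305.00140 — 2 statements merged into one kernel-verified Lean document; each statement's English description precedes it below -/
import Mathlib

section
/- (Key step of the Improved Iterated Major Order Theorem for Kemeny's rule) Let V be an election over a finite set C of alternatives and let U be a set of ordered pairs of distinct alternatives such that for every (a,b) ∈ U, a is ranked before b in every 2-wise median of V. Let x, y be distinct alternatives and set L_y = {z ∈ C : (z,y) ∈ U}, R_x = {z ∈ C : (x,z) ∈ U}, and Z = C ∖ (L_y ∪ R_x ∪ {x,y}). If 2δ_{xy} > Σ_{z ∈ Z} max(0, δ_{yz} + δ_{zx}), then x is ranked before y in every 2-wise median of V. -/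
/-!
The Kemeny score of a ranking is the sum of `n_{ba}` over the pairs `a` ranked before `b`, so
moving a single alternative across a block of alternatives only changes the terms of the pairs it
crosses. Suppose a median `π` ranks `y` before `x` and let `B` be the alternatives strictly between
them. Moving `x` to just before `y` lowers the score by `δ_{xy} + Σ_B δ_{xz}`, moving `y` to just
after `x` lowers it by `δ_{xy} - Σ_B δ_{yz}`; as `π` is a median, neither is positive, and adding
the two gives `2 δ_{xy} ≤ Σ_B (δ_{yz} + δ_{zx})`. Since `π` respects every pair of `U`, no element
of `B` lies in `L_y ∪ R_x`, so `B ⊆ Z`, contradicting the hypothesis.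
-/

open Finset

variable {α : Type}

/-- A ranking of the alternatives: a duplicate-free list containing every
alternative; earlier in the list means more preferred. -/
def IsRanking (l : List α) : Prop := l.Nodup ∧ ∀ a : α, a ∈ l

/-- The 3-wise Kendall tau distance between two rankings: the number of subsets
`S` with `|S| ≤ 3` on which the two rankings have different top elements. -/
def d3 [Fintype α] [DecidableEq α] (l m : List α) : ℕ :=
  ((Finset.univ : Finset α).powerset.filter
    (fun S => S.card ≤ 3 ∧ ∃ a ∈ S, ∃ b ∈ S, a ≠ b ∧
      (∀ c ∈ S, l.idxOf a ≤ l.idxOf c) ∧ (∀ c ∈ S, m.idxOf b ≤ m.idxOf c))).card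

/-- Total 3-wise Kendall tau distance from a ranking to a voting profile. -/
def d3V [Fintype α] [DecidableEq α] (l : List α) (V : Multiset (List α)) : ℕ :=
  (V.map (fun v => d3 l v)).sum

/-- A 3-wise median of the voting profile `V`. -/
def IsMedian3 [Fintype α] [DecidableEq α] (V : Multiset (List α)) (l : List α) : Prop :=
  IsRanking l ∧ ∀ m : List α, IsRanking m → d3V l V ≤ d3V m V

/-- The 2-wise Kendall tau distance between two rankings: the number of
two-element subsets on which the relative orders differ. -/
def d2 [Fintype α] [DecidableEq α] (l m : List α) : ℕ :=
  ((Finset.univ : Finset α).powerset.filter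
    (fun S => S.card = 2 ∧ ∃ a ∈ S, ∃ b ∈ S,
      l.idxOf a < l.idxOf b ∧ m.idxOf b < m.idxOf a)).card

/-- Total 2-wise Kendall tau distance from a ranking to a voting profile. -/
def d2V [Fintype α] [DecidableEq α] (l : List α) (V : Multiset (List α)) : ℕ :=
  (V.map (fun v => d2 l v)).sum

/-- A 2-wise median of the voting profile `V`. -/
def IsMedian2 [Fintype α] [DecidableEq α] (V : Multiset (List α)) (l : List α) : Prop :=
  IsRanking l ∧ ∀ m : List α, IsRanking m → d2V l V ≤ d2V m V

/-- `x ≥ₛ y`: `x` is ranked before `y` in at least `s·|V|` votes. -/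
def geq [DecidableEq α] (V : Multiset (List α)) (s : ℝ) (x y : α) : Prop :=
  s * (V.card : ℝ) ≤ (V.countP (fun v => v.idxOf x < v.idxOf y) : ℝ)

/-- `x` is a non-dirty alternative with respect to the threshold `s`. -/
def NonDirty [DecidableEq α] (V : Multiset (List α)) (s : ℝ) (x : α) : Prop :=
  ∀ y : α, y ≠ x → geq V s x y ∨ geq V s y x

/-- The election satisfies the `3/4`-majority rule with respect to the 3-wise
Kemeny voting scheme. -/
def Satisfies34 [Fintype α] [DecidableEq α] (V : Multiset (List α)) : Prop :=
  ∀ x : α, NonDirty V (3/4) x → ∀ y : α, y ≠ x →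
    (geq V (3/4) x y → ∀ π : List α, IsMedian3 V π → π.idxOf x < π.idxOf y) ∧
    (geq V (3/4) y x → ∀ π : List α, IsMedian3 V π → π.idxOf y < π.idxOf x)

/-- `n_{xy}`: the number of votes ranking `x` before `y`. -/
def nn2 [DecidableEq α] (V : Multiset (List α)) (x y : α) : ℕ :=
  V.countP (fun v => v.idxOf x < v.idxOf y)

/-- `n_{xyz}`: the number of votes ranking `x` before `y` before `z`. -/
def nn3 [DecidableEq α] (V : Multiset (List α)) (x y z : α) : ℕ :=
  V.countP (fun v => v.idxOf x < v.idxOf y ∧ v.idxOf y < v.idxOf z)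

/-- `n_{xyzt}`: the number of votes ranking `x` before `y` before `z` before `t`. -/
def nn4 [DecidableEq α] (V : Multiset (List α)) (x y z t : α) : ℕ :=
  V.countP (fun v => v.idxOf x < v.idxOf y ∧ v.idxOf y < v.idxOf z ∧
    v.idxOf z < v.idxOf t)

/-- `δ_{xy} = n_{xy} - n_{yx}`. -/
def del [DecidableEq α] (V : Multiset (List α)) (x y : α) : ℤ :=
  (nn2 V x y : ℤ) - nn2 V y x

/-- `P_{x,y,z}`. -/
def Pq [DecidableEq α] (V : Multiset (List α)) (x y z : α) : ℤ :=
  3 * (nn3 V x z y : ℤ) + nn3 V x y z + nn3 V z x y + nn3 V z y x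
    - 4 * nn3 V y z x - 2 * nn3 V y x z

/-- `Q_{x,y,z}`. -/
def Qq [DecidableEq α] (V : Multiset (List α)) (x y z : α) : ℤ :=
  (nn3 V x y z : ℤ) + nn3 V x z y - nn3 V y x z - nn3 V y z x

/-- `R_{y,x,z,t}`. -/
def Rr [DecidableEq α] (V : Multiset (List α)) (y x z t : α) : ℤ :=
  2 * (nn4 V y z t x : ℤ) + 2 * nn4 V y z x t + nn4 V y t z x + nn4 V y t x z

/-- `S_{y,x,z,t} = R_{y,x,z,t} - R_{x,y,z,t}`. -/
def Ss [DecidableEq α] (V : Multiset (List α)) (y x z t : α) : ℤ :=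
  Rr V y x z t - Rr V x y z t

theorem Multiset.sum_map_boole_eq_countP {β : Type} (s : Multiset β) (p : β → Prop)
    [DecidablePred p] : (s.map fun b => if p b then (1 : ℕ) else 0).sum = s.countP p := by
  induction s using Multiset.induction_on with
  | empty => simp
  | cons b s ih => by_cases h : p b <;> simp [h, ih, add_comm]

section Ranking

variable [DecidableEq α] {l : List α}

theorem IsRanking.idxOf_ne (hl : IsRanking l) {a b : α} (h : a ≠ b) : l.idxOf a ≠ l.idxOf b :=
  fun h' => h ((List.idxOf_inj (hl.2 a)).1 h')

theorem IsRanking.idxOf_lt_iff_not_gt (hl : IsRanking l) {a b : α} (h : a ≠ b) :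
    l.idxOf a < l.idxOf b ↔ ¬ l.idxOf b < l.idxOf a := by
  have := hl.idxOf_ne h
  omega

theorem exists_isRanking_idxOf_lt_iff [Fintype α] {key : α → ℕ} (hkey : Function.Injective key) :
    ∃ l : List α, IsRanking l ∧ ∀ a b, l.idxOf a < l.idxOf b ↔ key a < key b := by
  let _ : LinearOrder α := LinearOrder.lift' key hkey
  refine ⟨univ.sort (· ≤ ·), ⟨sort_nodup _ _, fun a => (mem_sort _).2 (mem_univ a)⟩, fun a b => ?_⟩
  have h := ((univ : Finset α).orderIsoOfFin rfl).symm.strictMono.lt_iff_lt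
    (a := ⟨a, mem_univ a⟩) (b := ⟨b, mem_univ b⟩)
  rw [Fin.lt_def, orderIsoOfFin_symm_apply, orderIsoOfFin_symm_apply] at h
  -- `h` uses the `DecidableEq` instance of the lifted order
  convert h using 2 <;> congr!

/-- The ranking obtained from `l` by moving `w` to just before position `t` of `l`. -/
theorem IsRanking.exists_move [Fintype α] (hl : IsRanking l) (w : α) (t : ℕ) :
    ∃ l' : List α, IsRanking l' ∧
      (∀ a b, a ≠ w → b ≠ w → (l'.idxOf a < l'.idxOf b ↔ l.idxOf a < l.idxOf b)) ∧
      ∀ z, z ≠ w → (l'.idxOf z < l'.idxOf w ↔ l.idxOf z < t) ∧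
        (l'.idxOf w < l'.idxOf z ↔ t ≤ l.idxOf z) := by
  have hkey : Function.Injective fun a => if a = w then 2 * t else 2 * l.idxOf a + 1 := by
    intro a b h
    dsimp only at h
    split_ifs at h with ha hb hb
    · exact ha.trans hb.symm
    · omega
    · omega
    · by_contra hab
      exact hl.idxOf_ne hab (by omega)
  obtain ⟨l', hl', hlt⟩ := exists_isRanking_idxOf_lt_iff hkey
  refine ⟨l', hl', fun a b ha hb => ?_, fun z hz => ?_⟩
  · simp [hlt, ha, hb]
  · simp only [hlt, hz, if_true, if_false]
    omega

end Ranking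

theorem del_swap [DecidableEq α] (V : Multiset (List α)) (x y : α) : del V y x = -del V x y := by
  simp [del]

section KemenyScore

variable [Fintype α] [DecidableEq α]

theorem d2_eq_card_filter (l m : List α) :
    d2 l m = #{p : α × α | l.idxOf p.1 < l.idxOf p.2 ∧ m.idxOf p.2 < m.idxOf p.1} := by
  symm
  refine card_bij (fun p _ => {p.1, p.2}) ?_ ?_ ?_
  · rintro ⟨a, b⟩ hab
    simp only [mem_filter, mem_univ, true_and] at hab
    have hne : a ≠ b := by rintro rfl; exact lt_irrefl _ hab.1
    simp only [mem_filter, mem_powerset, subset_univ, true_and, card_pair hne]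
    exact ⟨a, mem_insert_self _ _, b, by simp, hab⟩
  · rintro ⟨a, b⟩ hab ⟨a', b'⟩ hab' h
    simp only [mem_filter, mem_univ, true_and] at hab hab'
    have ha : a ∈ ({a', b'} : Finset α) := h ▸ mem_insert_self _ _
    have hb : b ∈ ({a', b'} : Finset α) := h ▸ by simp
    simp only [mem_insert, mem_singleton] at ha hb
    rcases ha with rfl | rfl <;> rcases hb with rfl | rfl <;> first | rfl | omega
  · intro S hS
    simp only [mem_filter, mem_powerset, subset_univ, true_and] at hS
    obtain ⟨hcard, a, ha, b, hb, hab⟩ := hS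
    have hne : a ≠ b := by rintro rfl; exact lt_irrefl _ hab.1
    refine ⟨(a, b), by simpa using hab, ?_⟩
    exact eq_of_subset_of_card_le (by simp [insert_subset_iff, ha, hb])
      (by simp [hcard, card_pair hne])

theorem d2V_eq_sum (l : List α) (V : Multiset (List α)) :
    d2V l V = ∑ p : α × α, if l.idxOf p.1 < l.idxOf p.2 then nn2 V p.2 p.1 else 0 := by
  simp only [d2V, d2_eq_card_filter, card_eq_sum_ones, sum_filter]
  rw [Multiset.sum_map_sum]
  refine sum_congr rfl fun p _ => ?_
  split_ifs with h <;> simp [h, nn2, Multiset.sum_map_boole_eq_countP]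

/-- Passing from `l` to `l'`, the alternative `w` jumps over exactly the alternatives of `W`. -/
theorem d2V_sub_d2V_of_jump (V : Multiset (List α)) {l l' : List α}
    (hl : IsRanking l) (hl' : IsRanking l') {w : α} {W : Finset α}
    (hW : ∀ z ∈ W, l.idxOf w < l.idxOf z)
    (hagree : ∀ a b, a ≠ w → b ≠ w → (l'.idxOf a < l'.idxOf b ↔ l.idxOf a < l.idxOf b))
    (hbefore : ∀ z, z ≠ w → (l'.idxOf z < l'.idxOf w ↔ l.idxOf z < l.idxOf w ∨ z ∈ W)) :
    (d2V l' V : ℤ) - d2V l V = ∑ z ∈ W, del V w z := by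
  have hpair : ∀ a b : α,
      ((if l'.idxOf a < l'.idxOf b then (nn2 V b a : ℤ) else 0)
        - (if l.idxOf a < l.idxOf b then (nn2 V b a : ℤ) else 0))
      = (if b = w then (if a ∈ W then (nn2 V w a : ℤ) else 0) else 0)
        - (if a = w then (if b ∈ W then (nn2 V b w : ℤ) else 0) else 0) := by
    intro a b
    by_cases ha : a = w <;> by_cases hb : b = w
    · simp [ha, hb]
    · subst ha
      have hba := Ne.symm hb
      by_cases hbW : b ∈ W
      · simp [hl'.idxOf_lt_iff_not_gt hba, hbefore b hb, hb, hbW, hW b hbW]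
      · simp [hl'.idxOf_lt_iff_not_gt hba, hbefore b hb, hl.idxOf_lt_iff_not_gt hba, hb, hbW]
    · subst hb
      by_cases haW : a ∈ W
      · simp [hbefore a ha, ha, haW, (hW a haW).not_gt]
      · simp [hbefore a ha, ha, haW]
    · simp [ha, hb, hagree a b ha hb]
  rw [d2V_eq_sum, d2V_eq_sum]
  push_cast
  rw [← sum_sub_distrib, Fintype.sum_prod_type]
  simp only [hpair, sum_sub_distrib, sum_ite_irrel, sum_const_zero, sum_ite_eq', sum_ite_mem,
    mem_univ, if_true, univ_inter, del]

end KemenyScore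

section Median

variable [Fintype α] [DecidableEq α] {V : Multiset (List α)} {π : List α}

def between (π : List α) (u w : α) : Finset α :=
  {z | π.idxOf u < π.idxOf z ∧ π.idxOf z < π.idxOf w}

theorem mem_between {u w z : α} :
    z ∈ between π u w ↔ π.idxOf u < π.idxOf z ∧ π.idxOf z < π.idxOf w := by
  simp [between]

/-- In a median, moving `w` to just before `u` does not lower the score. -/
theorem IsMedian2.del_add_sum_between_nonpos (hπ : IsMedian2 V π) {u w : α}
    (h : π.idxOf u < π.idxOf w) : del V w u + ∑ z ∈ between π u w, del V w z ≤ 0 := by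
  obtain ⟨π', hπ', hagree, hmove⟩ := hπ.1.exists_move w (π.idxOf u)
  have hu : u ∉ between π u w := by simp [mem_between]
  have hjump := d2V_sub_d2V_of_jump V hπ' hπ.1 (W := insert u (between π u w)) ?_
    (fun a b ha hb => (hagree a b ha hb).symm) ?_
  · rw [sum_insert hu] at hjump
    have := hπ.2 π' hπ'
    omega
  · intro z hz
    rw [mem_insert, mem_between] at hz
    have hzw : z ≠ w := by rcases hz with rfl | hz <;> rintro rfl <;> omega
    rw [(hmove z hzw).2]
    rcases hz with rfl | hz <;> omega
  · intro z hzw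
    rw [(hmove z hzw).1, mem_insert, mem_between]
    by_cases hzu : z = u
    · simp [hzu, h]
    · have := hπ.1.idxOf_ne hzu
      simp only [hzu, false_or]
      omega

/-- In a median, moving `u` to just after `w` does not lower the score. -/
theorem IsMedian2.del_add_sum_between_nonneg (hπ : IsMedian2 V π) {u w : α}
    (h : π.idxOf u < π.idxOf w) : 0 ≤ del V u w + ∑ z ∈ between π u w, del V u z := by
  obtain ⟨π', hπ', hagree, hmove⟩ := hπ.1.exists_move u (π.idxOf w + 1)
  have hw : w ∉ between π u w := by simp [mem_between]
  have hjump := d2V_sub_d2V_of_jump V hπ.1 hπ' (W := insert w (between π u w)) ?_ hagree ?_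
  · rw [sum_insert hw] at hjump
    have := hπ.2 π' hπ'
    omega
  · intro z hz
    rw [mem_insert, mem_between] at hz
    rcases hz with rfl | hz <;> omega
  · intro z hzu
    rw [(hmove z hzu).1, mem_insert, mem_between]
    by_cases hzw : z = w
    · simp [hzw]
    · have := hπ.1.idxOf_ne hzw
      have := hπ.1.idxOf_ne hzu
      simp only [hzw, false_or]
      omega

end Median

theorem stmt17_general [Fintype α] [DecidableEq α]
    (V : Multiset (List α))
    (U : Finset (α × α))
    (hU : ∀ p ∈ U, p.1 ≠ p.2 ∧
      ∀ π : List α, IsMedian2 V π → π.idxOf p.1 < π.idxOf p.2)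
    (x y : α) (hxy : x ≠ y)
    (hsum : 2 * del V x y >
      ∑ z ∈ (Finset.univ : Finset α) \
        ((Finset.univ.filter fun w => (w, y) ∈ U) ∪
          (Finset.univ.filter fun w => (x, w) ∈ U) ∪ {x, y}),
        max 0 (del V y z + del V z x)) :
    ∀ π : List α, IsMedian2 V π → π.idxOf x < π.idxOf y := by
  intro π hπ
  by_contra hnot
  have hyx : π.idxOf y < π.idxOf x := lt_of_le_of_ne (not_lt.1 hnot) (hπ.1.idxOf_ne hxy.symm)
  have hB : between π y x ⊆ (Finset.univ : Finset α) \
      ((Finset.univ.filter fun w => (w, y) ∈ U) ∪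
        (Finset.univ.filter fun w => (x, w) ∈ U) ∪ {x, y}) := by
    intro z hz
    rw [mem_between] at hz
    simp only [mem_sdiff, mem_univ, true_and, mem_union, mem_filter, mem_insert, mem_singleton,
      not_or]
    refine ⟨⟨fun hzy => ?_, fun hxz => ?_⟩, ?_, ?_⟩
    · have : π.idxOf z < π.idxOf y := (hU _ hzy).2 π hπ
      omega
    · have : π.idxOf x < π.idxOf z := (hU _ hxz).2 π hπ
      omega
    all_goals rintro rfl; omega
  have hdouble : 2 * del V x y ≤ ∑ z ∈ between π y x, (del V y z + del V z x) := by
    have hx := hπ.del_add_sum_between_nonpos hyx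
    have hy := hπ.del_add_sum_between_nonneg hyx
    rw [sum_congr rfl fun z _ => del_swap V z x, sum_neg_distrib] at hx
    rw [del_swap V x y] at hy
    rw [sum_add_distrib]
    linarith
  exact hsum.not_ge (hdouble.trans ((sum_le_sum fun z _ => le_max_right _ _).trans
    (sum_le_sum_of_subset_of_nonneg hB fun z _ _ => le_max_left _ _)))

theorem stmt17 [Fintype α] [DecidableEq α]
    (V : Multiset (List α)) (hV : ∀ v ∈ V, IsRanking v)
    (U : Finset (α × α))
    (hU : ∀ p ∈ U, p.1 ≠ p.2 ∧
      ∀ π : List α, IsMedian2 V π → π.idxOf p.1 < π.idxOf p.2)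
    (x y : α) (hxy : x ≠ y)
    (hsum : 2 * del V x y >
      ∑ z ∈ (Finset.univ : Finset α) \
        ((Finset.univ.filter fun w => (w, y) ∈ U) ∪
          (Finset.univ.filter fun w => (x, w) ∈ U) ∪ {x, y}),
        max 0 (del V y z + del V z x)) :
    ∀ π : List α, IsMedian2 V π → π.idxOf x < π.idxOf y :=
  stmt17_general V U hU x y hxy hsum
end

section
/- (3-wise Major Order Theorem with equality) Let x, y be two alternatives of an election with voting profile V over a finite set C of alternatives. Suppose that δ_{xy} ≥ 0, that Q_{x,y,z} ≥ 0 for all z ∈ C ∖ {x,y}, and that 2δ_{xy} ≥ Σ_{z ∈ C∖{x,y}} max(0, −P_{x,y,z} + Σ_{t ∈ C∖{x,y,z}} max(0, S_{y,x,z,t})). Then there exists a 3-wise median of the election in which x is ranked before y. -/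
open Finset

variable {α : Type}

/-!
Take a 3-wise median `π`. If `y` precedes `x` in it, write `π = A y B x C` and compare `π` with
`π₁ = A x y B C` (`x` moved just before `y`) and `π₂ = A B x y C` (`y` moved just after `x`).
Only the sets containing the moved alternative can change their top element, and sorting those
sets by their top element gives
`2 d(π) - d(π₁) - d(π₂) = 2δ_{xy} + 2 ∑_{z ∈ C} Q_{x,y,z} + ∑_{z ∈ B} (P_{x,y,z} - ∑_t S_{y,x,z,t})`
where `t` runs over the alternatives other than `x` ranked after `z`. The hypotheses make the
right-hand side nonnegative, so `π₁` or `π₂` is again a median, and both rank `x` before `y`.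
-/

section Rankings

theorem IsRanking.of_perm {l m : List α} (hl : IsRanking l) (h : m.Perm l) : IsRanking m :=
  ⟨h.nodup_iff.2 hl.1, fun a => h.mem_iff.2 (hl.2 a)⟩

theorem IsRanking.perm_toList [Fintype α] {l : List α} (hl : IsRanking l) :
    l.Perm (univ : Finset α).toList :=
  (List.perm_ext_iff_of_nodup hl.1 (nodup_toList _)).2 fun a => by simp [hl.2 a]

theorem isRanking_toList_univ [Fintype α] : IsRanking (univ : Finset α).toList :=
  ⟨nodup_toList _, fun a => by simp⟩

noncomputable def sortBy [Fintype α] {β : Type*} [LinearOrder β] (k : α → β) : List α :=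
  (univ : Finset α).toList.mergeSort fun a c => decide (k a ≤ k c)

theorem isRanking_sortBy [Fintype α] {β : Type*} [LinearOrder β] (k : α → β) :
    IsRanking (sortBy k) :=
  isRanking_toList_univ.of_perm (List.mergeSort_perm _ _)

variable [DecidableEq α] {l : List α}

theorem IsRanking.idxOf_injective (hl : IsRanking l) : Function.Injective (l.idxOf ·) :=
  fun a _ h => (List.idxOf_inj (hl.2 a)).1 h

theorem IsRanking.idxOf_lt_or_gt (hl : IsRanking l) {a c : α} (hac : a ≠ c) :
    l.idxOf a < l.idxOf c ∨ l.idxOf c < l.idxOf a :=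
  Nat.lt_or_gt_of_ne fun h => hac (hl.idxOf_injective h)

variable [Fintype α]

theorem idxOf_sortBy_lt_iff {β : Type*} [LinearOrder β] {k : α → β} (hk : Function.Injective k)
    (a c : α) : (sortBy k).idxOf a < (sortBy k).idxOf c ↔ k a < k c := by
  have hl := isRanking_sortBy k
  have hsorted : (sortBy k).Pairwise (fun a c => k a ≤ k c) := by
    simpa [sortBy] using List.pairwise_mergeSort (le := fun a c => decide (k a ≤ k c))
      (fun a b c => by simpa using le_trans) (fun a b => by simpa using le_total _ _) _
  have hmono : ∀ a c, (sortBy k).idxOf a < (sortBy k).idxOf c → k a ≤ k c := fun a c h => by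
    simpa only [List.getElem_idxOf] using List.pairwise_iff_getElem.1 hsorted _ _
      (List.idxOf_lt_length_of_mem (hl.2 a)) (List.idxOf_lt_length_of_mem (hl.2 c)) h
  refine ⟨fun h => (hmono a c h).lt_of_ne fun e => h.ne (by rw [hk e]), fun h => ?_⟩
  exact (hl.idxOf_lt_or_gt fun e => h.ne (by rw [e])).resolve_right
    fun h' => not_le.2 h (hmono c a h')

theorem exists_isMedian3 (V : Multiset (List α)) : ∃ π, IsMedian3 V π := by
  set l₀ := (univ : Finset α).toList
  have hmem : ∀ m, IsRanking m → m ∈ l₀.permutations.toFinset := fun m hm => by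
    simpa [List.mem_permutations] using hm.perm_toList
  obtain ⟨π, hπ, hmin⟩ := l₀.permutations.toFinset.exists_min_image (d3V · V)
    ⟨l₀, hmem l₀ isRanking_toList_univ⟩
  refine ⟨π, isRanking_toList_univ.of_perm ?_, fun m hm => hmin m (hmem m hm)⟩
  simpa [List.mem_permutations] using hπ

theorem IsMedian3.of_d3V_le {V : Multiset (List α)} {π σ : List α} (hπ : IsMedian3 V π)
    (hσ : IsRanking σ) (h : d3V σ V ≤ d3V π V) : IsMedian3 V σ :=
  ⟨hσ, fun m hm => h.trans (hπ.2 m hm)⟩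

def rankedAfter (l : List α) (a : α) : Finset α :=
  univ.filter (l.idxOf a < l.idxOf ·)

def rankedBetween (l : List α) (a b : α) : Finset α :=
  univ.filter fun c => l.idxOf a < l.idxOf c ∧ l.idxOf c < l.idxOf b

@[simp]
theorem mem_rankedAfter {a c : α} : c ∈ rankedAfter l a ↔ l.idxOf a < l.idxOf c := by
  simp [rankedAfter]

@[simp]
theorem mem_rankedBetween {a b c : α} :
    c ∈ rankedBetween l a b ↔ l.idxOf a < l.idxOf c ∧ l.idxOf c < l.idxOf b := by
  simp [rankedBetween]

theorem filter_rankedAfter {a b : α} (h : l.idxOf a < l.idxOf b) :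
    (rankedAfter l a).filter (l.idxOf b < l.idxOf ·) = rankedAfter l b := by
  ext c
  simp only [mem_filter, mem_rankedAfter, and_iff_right_iff_imp]
  exact h.trans

theorem IsRanking.rankedAfter_erase_eq_union (hl : IsRanking l) {a b : α}
    (hab : l.idxOf a < l.idxOf b) :
    (rankedAfter l a).erase b = rankedBetween l a b ∪ rankedAfter l b := by
  ext c
  simp only [mem_erase, mem_rankedAfter, mem_union, mem_rankedBetween]
  constructor
  · rintro ⟨hcb, hac⟩
    have : l.idxOf c ≠ l.idxOf b := hl.idxOf_injective.ne hcb
    omega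
  · rintro (h | h)
    · exact ⟨fun e => h.2.ne (congrArg (l.idxOf ·) e), h.1⟩
    · exact ⟨fun e => h.ne' (congrArg (l.idxOf ·) e), hab.trans h⟩

theorem disjoint_rankedBetween_rankedAfter (l : List α) (a b : α) :
    Disjoint (rankedBetween l a b) (rankedAfter l b) :=
  disjoint_left.2 fun _ hc hc' => (mem_rankedBetween.1 hc).2.not_gt (mem_rankedAfter.1 hc')

end Rankings

section TopElements

variable [DecidableEq α]

def IsFirst (l : List α) (S : Finset α) (a : α) : Prop :=
  ∀ c ∈ S, l.idxOf a ≤ l.idxOf c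

instance (l : List α) (S : Finset α) (a : α) : Decidable (IsFirst l S a) :=
  inferInstanceAs (Decidable (∀ c ∈ S, _))

/-- The predicate by which `d3 l m` filters the sets `S`. -/
def DisagreesOn (l m : List α) (S : Finset α) : Prop :=
  S.card ≤ 3 ∧ ∃ a ∈ S, ∃ b ∈ S, a ≠ b ∧ IsFirst l S a ∧ IsFirst m S b

instance (l m : List α) (S : Finset α) : Decidable (DisagreesOn l m S) :=
  inferInstanceAs (Decidable (_ ∧ _))

variable {l m : List α} {S : Finset α} {s : α}

theorem isFirst_insert_self_iff {T : Finset α} {a : α} :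
    IsFirst l (insert a T) a ↔ ∀ c ∈ T, l.idxOf a ≤ l.idxOf c := by
  simp [IsFirst]

theorem IsFirst.insert {T : Finset α} {a b : α} (h : IsFirst l T b)
    (hba : l.idxOf b ≤ l.idxOf a) : IsFirst l (insert a T) b :=
  forall_mem_insert _ _ _ |>.2 ⟨hba, h⟩

theorem IsRanking.eq_of_isFirst (hl : IsRanking l) {a b : α} (ha : a ∈ S) (hb : b ∈ S)
    (hfa : IsFirst l S a) (hfb : IsFirst l S b) : a = b :=
  hl.idxOf_injective ((hfa b hb).antisymm (hfb a ha))

theorem exists_isFirst (hS : S.Nonempty) : ∃ a ∈ S, IsFirst l S a :=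
  S.exists_min_image (l.idxOf ·) hS

theorem disagreesOn_iff_of_isFirst (hl : IsRanking l) (hs : s ∈ S) (hfs : IsFirst l S s) :
    DisagreesOn l m S ↔ S.card ≤ 3 ∧ ∃ b ∈ S, b ≠ s ∧ IsFirst m S b := by
  refine and_congr_right fun _ =>
    ⟨?_, fun ⟨b, hb, hbs, hfb⟩ => ⟨s, hs, b, hb, hbs.symm, hfs, hfb⟩⟩
  rintro ⟨a, ha, b, hb, hab, hfa, hfb⟩
  exact ⟨b, hb, hl.eq_of_isFirst ha hs hfa hfs ▸ hab.symm, hfb⟩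

theorem disagreesOn_congr_of_isFirst {l' : List α} (hl : IsRanking l) (hl' : IsRanking l')
    (hs : s ∈ S) (hfs : IsFirst l S s) (hfs' : IsFirst l' S s) :
    DisagreesOn l m S ↔ DisagreesOn l' m S := by
  rw [disagreesOn_iff_of_isFirst hl hs hfs, disagreesOn_iff_of_isFirst hl' hs hfs']

theorem disagreesOn_iff_not_isFirst (hl : IsRanking l) (hm : IsRanking m) (hs : s ∈ S)
    (hfs : IsFirst l S s) : DisagreesOn l m S ↔ S.card ≤ 3 ∧ ¬ IsFirst m S s := by
  rw [disagreesOn_iff_of_isFirst hl hs hfs]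
  refine and_congr_right fun _ =>
    ⟨fun ⟨b, hb, hbs, hfb⟩ hfs' => hbs (hm.eq_of_isFirst hb hs hfb hfs'), fun hns => ?_⟩
  obtain ⟨b, hb, hfb⟩ := exists_isFirst (l := m) ⟨s, hs⟩
  exact ⟨b, hb, fun h => hns (h ▸ hfb), hfb⟩

end TopElements

theorem Multiset.countP_eq_sum_map {β : Type*} (p : β → Prop) [DecidablePred p]
    (V : Multiset β) : V.countP p = (V.map fun v => if p v then 1 else 0).sum := by
  induction V using Multiset.induction_on with
  | empty => simp
  | cons a V ih => by_cases h : p a <;> simp [ih, h, add_comm]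

section Counting

variable [DecidableEq α] (V : Multiset (List α))

def disagreeCount (l : List α) (S : Finset α) : ℕ :=
  V.countP (DisagreesOn l · S)

def firstCount (S : Finset α) (a : α) : ℕ :=
  V.countP (IsFirst · S a)

theorem d3V_eq_sum_disagreeCount [Fintype α] (l : List α) :
    d3V l V = ∑ S ∈ (univ : Finset α).powerset, disagreeCount V l S := by
  have hd3 : ∀ v, d3 l v = ∑ S ∈ (univ : Finset α).powerset, if DisagreesOn l v S then 1 else 0 :=
    fun v => by rw [d3, card_filter]; exact sum_congr rfl fun S _ => if_congr Iff.rfl rfl rfl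
  rw [d3V, Multiset.map_congr rfl fun v _ => hd3 v, Multiset.sum_map_sum]
  exact sum_congr rfl fun S _ => (Multiset.countP_eq_sum_map _ V).symm

variable {V} {l l' : List α} {S : Finset α} {s s' : α}

theorem disagreeCount_eq_zero (hS : 3 < S.card) : disagreeCount V l S = 0 :=
  Multiset.countP_eq_zero.2 fun _ _ hv => absurd hv.1 (by omega)

theorem disagreeCount_singleton (a : α) : disagreeCount V l {a} = 0 :=
  Multiset.countP_eq_zero.2 fun _ _ ⟨_, _, hb, _, hc, hbc, _⟩ =>
    hbc ((mem_singleton.1 hb).trans (mem_singleton.1 hc).symm)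

theorem disagreeCount_eq (hV : ∀ v ∈ V, IsRanking v) (hl : IsRanking l) (hs : s ∈ S)
    (hfs : IsFirst l S s) (hS : S.card ≤ 3) :
    (disagreeCount V l S : ℤ) = V.card - firstCount V S s := by
  have h : disagreeCount V l S = V.countP (fun v => ¬ IsFirst v S s) :=
    Multiset.countP_congr rfl fun v hv =>
      propext ((disagreesOn_iff_not_isFirst hl (hV v hv) hs hfs).trans (and_iff_right hS))
  rw [h, firstCount, Multiset.card_eq_countP_add_countP (IsFirst · S s) V]
  push_cast
  ring

theorem disagreeCount_sub_disagreeCount (hV : ∀ v ∈ V, IsRanking v) (hl : IsRanking l)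
    (hl' : IsRanking l') (hs : s ∈ S) (hs' : s' ∈ S) (hfs : IsFirst l S s)
    (hfs' : IsFirst l' S s') (hS : S.card ≤ 3) :
    (disagreeCount V l S : ℤ) - disagreeCount V l' S = firstCount V S s' - firstCount V S s := by
  rw [disagreeCount_eq hV hl hs hfs hS, disagreeCount_eq hV hl' hs' hfs' hS]
  ring

end Counting

section PowersetSums

variable [DecidableEq α] {β M : Type*} [LinearOrder β] [AddCommMonoid M] {p : α → β}

theorem sum_powerset_eq_add_sum_least (hp : Function.Injective p) (D : Finset α)
    (f : Finset α → M) :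
    ∑ T ∈ D.powerset, f T =
      f ∅ + ∑ a ∈ D, ∑ T ∈ (D.filter (p a < p ·)).powerset, f (insert a T) := by
  induction D using Finset.induction_on_min_value p with
  | empty => simp
  | insert a D ha hmin ih =>
    have hfilter_a : (insert a D).filter (p a < p ·) = D := by
      ext c
      simp only [mem_filter, mem_insert]
      refine ⟨fun ⟨hc, hlt⟩ => hc.resolve_left (by rintro rfl; exact lt_irrefl _ hlt),
        fun hc => ⟨Or.inr hc, (hmin c hc).lt_of_ne (hp.ne fun h => ha (h ▸ hc))⟩⟩
    have hrest : ∑ b ∈ D, ∑ T ∈ ((insert a D).filter (p b < p ·)).powerset, f (insert b T) =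
        ∑ b ∈ D, ∑ T ∈ (D.filter (p b < p ·)).powerset, f (insert b T) :=
      sum_congr rfl fun b hb => by rw [filter_insert, if_neg (not_lt.2 (hmin b hb))]
    rw [sum_powerset_insert ha, sum_insert ha, hfilter_a, hrest, ih]
    abel

theorem sum_powerset_eq_of_card_le_two (hp : Function.Injective p) (D : Finset α)
    (f : Finset α → M) (hf : ∀ T ⊆ D, 3 ≤ T.card → f T = 0) :
    ∑ T ∈ D.powerset, f T = f ∅ + ∑ b ∈ D, (f {b} + ∑ c ∈ D.filter (p b < p ·), f {b, c}) := by
  rw [sum_powerset_eq_add_sum_least hp]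
  refine congrArg (f ∅ + ·) (sum_congr rfl fun b hb => ?_)
  rw [sum_powerset_eq_add_sum_least hp, insert_empty]
  refine congrArg (f {b} + ·) (sum_congr rfl fun c hc => ?_)
  rw [sum_eq_single_of_mem ∅ (empty_mem_powerset _), insert_empty]
  intro T hT hTne
  simp only [mem_powerset, subset_iff, mem_filter] at hT hc
  apply hf
  · intro d hd
    simp only [mem_insert] at hd
    rcases hd with rfl | rfl | hd
    exacts [hb, hc.1, (hT hd).1.1]
  · have hc' : c ∉ T := fun h => lt_irrefl _ (hT h).2
    have hb' : b ∉ insert c T := by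
      simp only [mem_insert, not_or]
      exact ⟨by rintro rfl; exact lt_irrefl _ hc.2,
        fun h => lt_asymm (hT h).1.2 (hc.2.trans (hT h).2)⟩
    rw [card_insert_of_notMem hb', card_insert_of_notMem hc']
    have := card_pos.2 (nonempty_iff_ne_empty.2 hTne)
    omega

end PowersetSums

section LocalChanges

variable [DecidableEq α] [Fintype α] {V : Multiset (List α)} {l l' : List α}

/-- Sort the sets by their top element `a` in `l`: for `a ≠ u` it is also their top element
in `l'`. -/
theorem d3V_sub_d3V_eq_sum_powerset (hl : IsRanking l) (hl' : IsRanking l') (u : α)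
    (hmove : ∀ a c, a ≠ u → l.idxOf a < l.idxOf c → l'.idxOf a < l'.idxOf c) :
    (d3V l' V : ℤ) - d3V l V = ∑ T ∈ (rankedAfter l u).powerset,
      ((disagreeCount V l' (insert u T) : ℤ) - disagreeCount V l (insert u T)) := by
  rw [d3V_eq_sum_disagreeCount, d3V_eq_sum_disagreeCount, Nat.cast_sum, Nat.cast_sum,
    ← sum_sub_distrib, sum_powerset_eq_add_sum_least hl.idxOf_injective,
    sum_eq_single_of_mem u (mem_univ u)]
  · have hempty : ∀ m : List α, disagreeCount V m ∅ = 0 := fun m =>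
      Multiset.countP_eq_zero.2 fun _ _ ⟨_, _, ha, _⟩ => absurd ha (notMem_empty _)
    simp [hempty, rankedAfter]
  intro a _ hau
  refine sum_eq_zero fun T hT =>
    sub_eq_zero.2 (congrArg _ (Multiset.countP_congr rfl fun v _ => ?_))
  simp only [mem_powerset, subset_iff, mem_filter, mem_univ, true_and] at hT
  exact propext (disagreesOn_congr_of_isFirst hl' hl (mem_insert_self a T)
    (isFirst_insert_self_iff.2 fun c hc => (hmove a c hau (hT hc)).le)
    (isFirst_insert_self_iff.2 fun c hc => (hT hc).le))

theorem d3V_sub_d3V_eq_sum_pairs (hl : IsRanking l) (hl' : IsRanking l') (u : α)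
    (hmove : ∀ a c, a ≠ u → l.idxOf a < l.idxOf c → l'.idxOf a < l'.idxOf c) :
    (d3V l' V : ℤ) - d3V l V = ∑ b ∈ rankedAfter l u,
      (((disagreeCount V l' {u, b} : ℤ) - disagreeCount V l {u, b}) +
        ∑ c ∈ rankedAfter l b,
          ((disagreeCount V l' {u, b, c} : ℤ) - disagreeCount V l {u, b, c})) := by
  rw [d3V_sub_d3V_eq_sum_powerset hl hl' u hmove,
    sum_powerset_eq_of_card_le_two hl.idxOf_injective]
  · simp only [insert_empty, disagreeCount_singleton, sub_self, zero_add]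
    exact sum_congr rfl fun b hb => by rw [filter_rankedAfter (mem_rankedAfter.1 hb)]
  intro T hT hcard
  have hu : u ∉ T := fun h => lt_irrefl _ (mem_rankedAfter.1 (hT h))
  have hcard' : 3 < (insert u T).card := by
    rw [card_insert_of_notMem hu]
    omega
  simp [disagreeCount_eq_zero hcard']

end LocalChanges
section CountIdentities

variable [DecidableEq α] {V : Multiset (List α)} {x y z t : α}

/- Each identity holds for a single vote, where every count is the indicator of a relative order
of distinct positions; induction on the profile adds the votes up. -/

theorem firstCount_sub_firstCount_eq_del (hV : ∀ v ∈ V, IsRanking v) (hxy : x ≠ y) :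
    (firstCount V {x, y} x : ℤ) - firstCount V {x, y} y = del V x y := by
  induction V using Multiset.induction_on with
  | empty => simp [firstCount, del, nn2]
  | cons v V ih =>
    simp only [Multiset.mem_cons, forall_eq_or_imp] at hV
    have h1 := hV.1.idxOf_injective.ne hxy
    have ih := ih hV.2
    simp only [firstCount, del, nn2, Multiset.countP_cons, IsFirst, forall_mem_insert,
      mem_singleton, forall_eq] at ih h1 ⊢
    push_cast
    grind

theorem firstCount_sub_firstCount_eq_Qq (hV : ∀ v ∈ V, IsRanking v) (hxy : x ≠ y) (hxz : x ≠ z)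
    (hyz : y ≠ z) :
    (firstCount V {x, y, z} x : ℤ) - firstCount V {x, y, z} y = Qq V x y z := by
  induction V using Multiset.induction_on with
  | empty => simp [firstCount, Qq, nn3]
  | cons v V ih =>
    simp only [Multiset.mem_cons, forall_eq_or_imp] at hV
    have h1 := hV.1.idxOf_injective.ne hxy
    have h2 := hV.1.idxOf_injective.ne hxz
    have h3 := hV.1.idxOf_injective.ne hyz
    have ih := ih hV.2
    simp only [firstCount, Qq, nn3, Multiset.countP_cons, IsFirst, forall_mem_insert,
      mem_singleton, forall_eq] at ih h1 h2 h3 ⊢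
    push_cast
    grind

theorem firstCount_sub_firstCount_add_Qq_eq_Pq (hV : ∀ v ∈ V, IsRanking v) (hxy : x ≠ y)
    (hxz : x ≠ z) (hyz : y ≠ z) :
    ((firstCount V {x, z} x : ℤ) - firstCount V {x, z} z) +
      ((firstCount V {y, z} z : ℤ) - firstCount V {y, z} y) +
      ((firstCount V {y, z, x} z : ℤ) - firstCount V {y, z, x} y) + Qq V x y z = Pq V x y z := by
  induction V using Multiset.induction_on with
  | empty => simp [firstCount, Qq, Pq, nn3]
  | cons v V ih =>
    simp only [Multiset.mem_cons, forall_eq_or_imp] at hV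
    have h1 := hV.1.idxOf_injective.ne hxy
    have h2 := hV.1.idxOf_injective.ne hxz
    have h3 := hV.1.idxOf_injective.ne hyz
    have ih := ih hV.2
    simp only [firstCount, Qq, Pq, nn3, Multiset.countP_cons, IsFirst, forall_mem_insert,
      mem_singleton, forall_eq] at ih h1 h2 h3 ⊢
    push_cast
    grind (splits := 40)

theorem firstCount_sub_firstCount_eq_Ss (hV : ∀ v ∈ V, IsRanking v) (hxy : x ≠ y) (hxz : x ≠ z)
    (hxt : x ≠ t) (hyz : y ≠ z) (hyt : y ≠ t) (hzt : z ≠ t) :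
    ((firstCount V {x, z, t} x : ℤ) - firstCount V {x, z, t} z) +
      ((firstCount V {y, z, t} z : ℤ) - firstCount V {y, z, t} y) = - Ss V y x z t := by
  induction V using Multiset.induction_on with
  | empty => simp [firstCount, Ss, Rr, nn4]
  | cons v V ih =>
    simp only [Multiset.mem_cons, forall_eq_or_imp] at hV
    have h1 := hV.1.idxOf_injective.ne hxy
    have h2 := hV.1.idxOf_injective.ne hxz
    have h3 := hV.1.idxOf_injective.ne hxt
    have h4 := hV.1.idxOf_injective.ne hyz
    have h5 := hV.1.idxOf_injective.ne hyt
    have h6 := hV.1.idxOf_injective.ne hzt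
    have ih := ih hV.2
    simp only [firstCount, Ss, Rr, nn4, Multiset.countP_cons, IsFirst, forall_mem_insert,
      mem_singleton, forall_eq] at ih h1 h2 h3 h4 h5 h6 ⊢
    push_cast
    grind (splits := 40)

end CountIdentities

section Moves

variable [DecidableEq α] {V : Multiset (List α)} {π : List α} {x y : α}

/-- Positions in `π` are doubled so that `x` can take the odd slot just before `y`. -/
def moveBeforeKey (π : List α) (x y c : α) : ℤ :=
  if c = x then 2 * π.idxOf y - 1 else 2 * π.idxOf c

/-- Positions in `π` are doubled so that `y` can take the odd slot just after `x`. -/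
def moveAfterKey (π : List α) (x y c : α) : ℤ :=
  if c = y then 2 * π.idxOf x + 1 else 2 * π.idxOf c

theorem moveBeforeKey_injective (hπ : IsRanking π) : Function.Injective (moveBeforeKey π x y) := by
  intro a c h
  simp only [moveBeforeKey] at h
  split_ifs at h with ha hc hc
  · rw [ha, hc]
  · omega
  · omega
  · exact hπ.idxOf_injective (show π.idxOf a = π.idxOf c by omega)

theorem moveAfterKey_injective (hπ : IsRanking π) : Function.Injective (moveAfterKey π x y) := by
  intro a c h
  simp only [moveAfterKey] at h
  split_ifs at h with ha hc hc
  · rw [ha, hc]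
  · omega
  · omega
  · exact hπ.idxOf_injective (show π.idxOf a = π.idxOf c by omega)

variable [Fintype α]

noncomputable def moveBefore (π : List α) (x y : α) : List α :=
  sortBy (moveBeforeKey π x y)

noncomputable def moveAfter (π : List α) (x y : α) : List α :=
  sortBy (moveAfterKey π x y)

theorem isRanking_moveBefore : IsRanking (moveBefore π x y) :=
  isRanking_sortBy _

theorem isRanking_moveAfter : IsRanking (moveAfter π x y) :=
  isRanking_sortBy _

theorem idxOf_moveBefore_self_lt (hπ : IsRanking π) (hxy : x ≠ y) :
    (moveBefore π x y).idxOf x < (moveBefore π x y).idxOf y := by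
  rw [moveBefore, idxOf_sortBy_lt_iff (moveBeforeKey_injective hπ)]
  simp only [moveBeforeKey, ite_true, hxy.symm, ite_false]
  omega

theorem idxOf_moveAfter_self_lt (hπ : IsRanking π) (hxy : x ≠ y) :
    (moveAfter π x y).idxOf x < (moveAfter π x y).idxOf y := by
  rw [moveAfter, idxOf_sortBy_lt_iff (moveAfterKey_injective hπ)]
  simp only [moveAfterKey, ite_true, hxy, ite_false]
  omega

theorem idxOf_lt_of_idxOf_moveBefore_lt (hπ : IsRanking π) (hyx : π.idxOf y < π.idxOf x)
    {a c : α} (ha : a ≠ x) (h : (moveBefore π x y).idxOf a < (moveBefore π x y).idxOf c) :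
    π.idxOf a < π.idxOf c := by
  rw [moveBefore, idxOf_sortBy_lt_iff (moveBeforeKey_injective hπ)] at h
  rcases eq_or_ne c x with rfl | hc
  · simp only [moveBeforeKey, if_neg ha, ite_true] at h
    omega
  · simp only [moveBeforeKey, if_neg ha, if_neg hc] at h
    omega

theorem mem_rankedAfter_moveBefore_self (hπ : IsRanking π) {c : α} :
    c ∈ rankedAfter (moveBefore π x y) x ↔ c ≠ x ∧ π.idxOf y ≤ π.idxOf c := by
  rw [mem_rankedAfter, moveBefore, idxOf_sortBy_lt_iff (moveBeforeKey_injective hπ)]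
  rcases eq_or_ne c x with rfl | hc
  · simp
  · simp only [moveBeforeKey, ite_true, hc, ite_false, ne_eq, not_false_eq_true, true_and]
    omega

theorem rankedAfter_moveBefore (hπ : IsRanking π) {b : α} (hbx : b ≠ x)
    (hyb : π.idxOf y ≤ π.idxOf b) :
    rankedAfter (moveBefore π x y) b = (rankedAfter π b).erase x := by
  ext c
  rw [mem_erase, mem_rankedAfter, mem_rankedAfter, moveBefore,
    idxOf_sortBy_lt_iff (moveBeforeKey_injective hπ)]
  rcases eq_or_ne c x with rfl | hc
  · simp only [moveBeforeKey, if_neg hbx, ite_true, ne_eq, not_true_eq_false, false_and,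
      iff_false, not_lt]
    omega
  · simp only [moveBeforeKey, if_neg hbx, hc, ite_false, ne_eq, not_false_eq_true, true_and]
    omega

theorem idxOf_moveAfter_le_iff (hπ : IsRanking π) (a c : α) :
    (moveAfter π x y).idxOf a ≤ (moveAfter π x y).idxOf c ↔
      moveAfterKey π x y a ≤ moveAfterKey π x y c := by
  rw [← not_lt, moveAfter, idxOf_sortBy_lt_iff (moveAfterKey_injective hπ), not_lt]

theorem idxOf_moveAfter_lt_of_idxOf_lt (hπ : IsRanking π) (hyx : π.idxOf y < π.idxOf x)
    {a c : α} (ha : a ≠ y) (h : π.idxOf a < π.idxOf c) :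
    (moveAfter π x y).idxOf a < (moveAfter π x y).idxOf c := by
  rw [moveAfter, idxOf_sortBy_lt_iff (moveAfterKey_injective hπ)]
  rcases eq_or_ne c y with rfl | hc
  · simp only [moveAfterKey, if_neg ha, ite_true]
    omega
  · simp only [moveAfterKey, if_neg ha, if_neg hc]
    omega

theorem disagreeCount_sub_disagreeCount_moveBefore (hV : ∀ v ∈ V, IsRanking v)
    (hπ : IsRanking π) {T : Finset α} (hT : T ⊆ rankedAfter (moveBefore π x y) x) {b : α}
    (hb : b ∈ T) (hfb : IsFirst π T b) (hcard : T.card ≤ 2) :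
    (disagreeCount V π (insert x T) : ℤ) - disagreeCount V (moveBefore π x y) (insert x T) =
      if π.idxOf b < π.idxOf x then
        (firstCount V (insert x T) x : ℤ) - firstCount V (insert x T) b else 0 := by
  have hcard' : (insert x T).card ≤ 3 := (card_insert_le _ _).trans (by omega)
  have hfx₁ : IsFirst (moveBefore π x y) (insert x T) x :=
    isFirst_insert_self_iff.2 fun c hc => (mem_rankedAfter.1 (hT hc)).le
  split_ifs with hbx
  · exact disagreeCount_sub_disagreeCount hV hπ isRanking_moveBefore (mem_insert_of_mem hb)
      (mem_insert_self x T) (hfb.insert hbx.le) hfx₁ hcard'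
  · have hfx : IsFirst π (insert x T) x :=
      isFirst_insert_self_iff.2 fun c hc => (not_lt.1 hbx).trans (hfb c hc)
    rw [disagreeCount_sub_disagreeCount hV hπ isRanking_moveBefore (mem_insert_self x T)
      (mem_insert_self x T) hfx hfx₁ hcard', sub_self]

theorem disagreeCount_sub_disagreeCount_moveAfter (hV : ∀ v ∈ V, IsRanking v)
    (hπ : IsRanking π) {T : Finset α} (hT : T ⊆ rankedAfter π y) {b : α} (hb : b ∈ T)
    (hfb : IsFirst π T b) (hcard : T.card ≤ 2) :
    (disagreeCount V (moveAfter π x y) (insert y T) : ℤ) - disagreeCount V π (insert y T) =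
      if π.idxOf b ≤ π.idxOf x then
        (firstCount V (insert y T) y : ℤ) - firstCount V (insert y T) b else 0 := by
  have hcard' : (insert y T).card ≤ 3 := (card_insert_le _ _).trans (by omega)
  have hTy : ∀ c ∈ T, π.idxOf y < π.idxOf c ∧ c ≠ y := fun c hc => by
    have := mem_rankedAfter.1 (hT hc)
    exact ⟨this, fun h => by subst h; omega⟩
  have hfy : IsFirst π (insert y T) y := isFirst_insert_self_iff.2 fun c hc => (hTy c hc).1.le
  split_ifs with hbx
  · have hfb₂ : IsFirst (moveAfter π x y) (insert y T) b := by
      intro c hc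
      rw [idxOf_moveAfter_le_iff hπ]
      rcases mem_insert.1 hc with rfl | hc
      · simp only [moveAfterKey, if_neg (hTy b hb).2, ite_true]
        omega
      · have := hfb c hc
        simp only [moveAfterKey, if_neg (hTy b hb).2, if_neg (hTy c hc).2]
        omega
    exact disagreeCount_sub_disagreeCount hV isRanking_moveAfter hπ (mem_insert_of_mem hb)
      (mem_insert_self y T) hfb₂ hfy hcard'
  · have hfy₂ : IsFirst (moveAfter π x y) (insert y T) y := isFirst_insert_self_iff.2 fun c hc => by
      rw [idxOf_moveAfter_le_iff hπ]
      have := hfb c hc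
      simp only [moveAfterKey, ite_true, if_neg (hTy c hc).2]
      omega
    rw [disagreeCount_sub_disagreeCount hV isRanking_moveAfter hπ (mem_insert_self y T)
      (mem_insert_self y T) hfy₂ hfy hcard', sub_self]

end Moves

section MajorOrder

variable [DecidableEq α] [Fintype α] {V : Multiset (List α)} {π : List α} {x y : α}

theorem d3V_sub_d3V_moveBefore (hV : ∀ v ∈ V, IsRanking v) (hπ : IsRanking π)
    (hyx : π.idxOf y < π.idxOf x) :
    (d3V π V : ℤ) - d3V (moveBefore π x y) V = ∑ b ∈ insert y (rankedBetween π y x),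
      (((firstCount V {x, b} x : ℤ) - firstCount V {x, b} b) +
        ∑ c ∈ (rankedAfter π b).erase x,
          ((firstCount V {x, b, c} x : ℤ) - firstCount V {x, b, c} b)) := by
  have hmem : ∀ {b}, b ∈ rankedAfter (moveBefore π x y) x ↔ b ≠ x ∧ π.idxOf y ≤ π.idxOf b :=
    mem_rankedAfter_moveBefore_self hπ
  have hsub : insert y (rankedBetween π y x) ⊆ rankedAfter (moveBefore π x y) x := fun b hb => by
    rw [mem_insert, mem_rankedBetween] at hb
    refine hmem.2 ⟨?_, ?_⟩ <;> rcases hb with rfl | hb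
    exacts [fun h => hyx.ne (congrArg (π.idxOf ·) h), fun h => hb.2.ne (congrArg (π.idxOf ·) h),
      le_rfl, hb.1.le]
  have hpair : ∀ {b c}, b ∈ rankedAfter (moveBefore π x y) x → c ∈ (rankedAfter π b).erase x →
      {b, c} ⊆ rankedAfter (moveBefore π x y) x := fun hb hc => by
    rw [mem_erase, mem_rankedAfter] at hc
    refine insert_subset_iff.2 ⟨hb, singleton_subset_iff.2 (hmem.2 ⟨hc.1, ?_⟩)⟩
    have := (hmem.1 hb).2
    omega
  have hfirst : ∀ {b c}, c ∈ (rankedAfter π b).erase x → IsFirst π {b, c} b := fun hc =>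
    isFirst_insert_self_iff.2 (by simpa using (mem_rankedAfter.1 (mem_erase.1 hc).2).le)
  rw [d3V_sub_d3V_eq_sum_pairs isRanking_moveBefore hπ x
    fun a c ha => idxOf_lt_of_idxOf_moveBefore_lt hπ hyx ha]
  -- for `b` ranked after `x` in `π`, `x` stays the top element of the sets `{x, b, ...}`
  symm
  refine sum_subset_zero_on_sdiff hsub (fun b hb => ?_) (fun b hb => ?_)
  · obtain ⟨hb₁, hb'⟩ := mem_sdiff.1 hb
    obtain ⟨hbx, hyb⟩ := hmem.1 hb₁
    rw [mem_insert, mem_rankedBetween, not_or] at hb'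
    have hby : π.idxOf b ≠ π.idxOf y := hπ.idxOf_injective.ne hb'.1
    have hbx' : π.idxOf b ≠ π.idxOf x := hπ.idxOf_injective.ne hbx
    rw [rankedAfter_moveBefore hπ hbx hyb, disagreeCount_sub_disagreeCount_moveBefore hV hπ
      (singleton_subset_iff.2 hb₁) (mem_singleton_self b) (by simp [IsFirst]) (by simp),
      if_neg (by omega), zero_add]
    refine sum_eq_zero fun c hc => ?_
    rw [disagreeCount_sub_disagreeCount_moveBefore hV hπ (hpair hb₁ hc) (mem_insert_self b {c})
      (hfirst hc) card_le_two, if_neg (by omega)]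
  · have hbx' : π.idxOf b < π.idxOf x := by
      rcases mem_insert.1 hb with rfl | hb
      exacts [hyx, (mem_rankedBetween.1 hb).2]
    obtain ⟨hbx, hyb⟩ := hmem.1 (hsub hb)
    rw [rankedAfter_moveBefore hπ hbx hyb, disagreeCount_sub_disagreeCount_moveBefore hV hπ
      (singleton_subset_iff.2 (hsub hb)) (mem_singleton_self b) (by simp [IsFirst]) (by simp),
      if_pos hbx']
    refine congrArg _ (sum_congr rfl fun c hc => ?_)
    rw [disagreeCount_sub_disagreeCount_moveBefore hV hπ (hpair (hsub hb) hc)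
      (mem_insert_self b {c}) (hfirst hc) card_le_two, if_pos hbx']

theorem d3V_moveAfter_sub_d3V (hV : ∀ v ∈ V, IsRanking v) (hπ : IsRanking π)
    (hyx : π.idxOf y < π.idxOf x) :
    (d3V (moveAfter π x y) V : ℤ) - d3V π V = ∑ b ∈ insert x (rankedBetween π y x),
      (((firstCount V {y, b} y : ℤ) - firstCount V {y, b} b) +
        ∑ c ∈ rankedAfter π b, ((firstCount V {y, b, c} y : ℤ) - firstCount V {y, b, c} b)) := by
  have hsub : insert x (rankedBetween π y x) ⊆ rankedAfter π y := fun b hb => by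
    rcases mem_insert.1 hb with rfl | hb
    exacts [mem_rankedAfter.2 hyx, mem_rankedAfter.2 (mem_rankedBetween.1 hb).1]
  have hpair : ∀ {b c}, b ∈ rankedAfter π y → c ∈ rankedAfter π b → {b, c} ⊆ rankedAfter π y :=
    fun hb hc => insert_subset_iff.2 ⟨hb, singleton_subset_iff.2
      (mem_rankedAfter.2 ((mem_rankedAfter.1 hb).trans (mem_rankedAfter.1 hc)))⟩
  have hfirst : ∀ {b c}, c ∈ rankedAfter π b → IsFirst π {b, c} b := fun hc =>
    isFirst_insert_self_iff.2 (by simpa using (mem_rankedAfter.1 hc).le)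
  rw [d3V_sub_d3V_eq_sum_pairs hπ isRanking_moveAfter y
    fun a c ha => idxOf_moveAfter_lt_of_idxOf_lt hπ hyx ha]
  -- for `b` ranked after `x` in `π`, `y` stays the top element of the sets `{y, b, ...}`
  symm
  refine sum_subset_zero_on_sdiff hsub (fun b hb => ?_) (fun b hb => ?_)
  · obtain ⟨hb₁, hb'⟩ := mem_sdiff.1 hb
    rw [mem_insert, mem_rankedBetween, not_or] at hb'
    have hbx : π.idxOf b ≠ π.idxOf x := hπ.idxOf_injective.ne hb'.1
    have hyb := mem_rankedAfter.1 hb₁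
    rw [disagreeCount_sub_disagreeCount_moveAfter hV hπ (singleton_subset_iff.2 hb₁)
      (mem_singleton_self b) (by simp [IsFirst]) (by simp), if_neg (by omega), zero_add]
    refine sum_eq_zero fun c hc => ?_
    rw [disagreeCount_sub_disagreeCount_moveAfter hV hπ (hpair hb₁ hc) (mem_insert_self b {c})
      (hfirst hc) card_le_two, if_neg (by omega)]
  · have hbx : π.idxOf b ≤ π.idxOf x := by
      rcases mem_insert.1 hb with rfl | hb
      exacts [le_rfl, (mem_rankedBetween.1 hb).2.le]
    rw [disagreeCount_sub_disagreeCount_moveAfter hV hπ (singleton_subset_iff.2 (hsub hb))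
      (mem_singleton_self b) (by simp [IsFirst]) (by simp), if_pos hbx]
    refine congrArg _ (sum_congr rfl fun c hc => ?_)
    rw [disagreeCount_sub_disagreeCount_moveAfter hV hπ (hpair (hsub hb) hc)
      (mem_insert_self b {c}) (hfirst hc) card_le_two, if_pos hbx]

theorem sum_firstCount_sub_sum_firstCount (hV : ∀ v ∈ V, IsRanking v) {b : α}
    (hb : b ∈ rankedBetween π y x) :
    (((firstCount V {x, b} x : ℤ) - firstCount V {x, b} b) +
        ∑ c ∈ (rankedAfter π b).erase x,
          ((firstCount V {x, b, c} x : ℤ) - firstCount V {x, b, c} b)) -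
      (((firstCount V {y, b} y : ℤ) - firstCount V {y, b} b) +
        ∑ c ∈ rankedAfter π b, ((firstCount V {y, b, c} y : ℤ) - firstCount V {y, b, c} b)) =
      Pq V x y b - Qq V x y b - ∑ c ∈ (rankedAfter π b).erase x, Ss V y x b c := by
  rw [mem_rankedBetween] at hb
  have hxy : x ≠ y := fun h => by subst h; omega
  have hbx : b ≠ x := fun h => by subst h; omega
  have hby : b ≠ y := fun h => by subst h; omega
  have hS : ∑ c ∈ (rankedAfter π b).erase x,
        ((firstCount V {x, b, c} x : ℤ) - firstCount V {x, b, c} b) -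
      ∑ c ∈ (rankedAfter π b).erase x, ((firstCount V {y, b, c} y : ℤ) - firstCount V {y, b, c} b) =
      -∑ c ∈ (rankedAfter π b).erase x, Ss V y x b c := by
    rw [← sum_sub_distrib, ← sum_neg_distrib]
    refine sum_congr rfl fun c hc => ?_
    obtain ⟨hcx, hbc⟩ := mem_erase.1 hc
    rw [mem_rankedAfter] at hbc
    have := firstCount_sub_firstCount_eq_Ss hV hxy hbx.symm (Ne.symm hcx) hby.symm
      (fun h => by subst h; omega) (fun h => by subst h; omega)
    linarith
  have hP := firstCount_sub_firstCount_add_Qq_eq_Pq hV hxy hbx.symm hby.symm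
  rw [← insert_erase (mem_rankedAfter.2 hb.2), sum_insert (notMem_erase x _),
    erase_insert_eq_erase, erase_idem]
  linarith

theorem two_mul_d3V_sub_d3V_moveBefore_sub_d3V_moveAfter (hV : ∀ v ∈ V, IsRanking v)
    (hπ : IsRanking π) (hyx : π.idxOf y < π.idxOf x) :
    2 * (d3V π V : ℤ) - d3V (moveBefore π x y) V - d3V (moveAfter π x y) V =
      2 * del V x y + 2 * ∑ c ∈ rankedAfter π x, Qq V x y c +
        ∑ b ∈ rankedBetween π y x,
          (Pq V x y b - ∑ c ∈ (rankedAfter π b).erase x, Ss V y x b c) := by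
  have hxy : x ≠ y := fun h => by subst h; omega
  have hG₁ : ((firstCount V {x, y} x : ℤ) - firstCount V {x, y} y) +
      ∑ c ∈ (rankedAfter π y).erase x,
        ((firstCount V {x, y, c} x : ℤ) - firstCount V {x, y, c} y) =
      del V x y + (∑ c ∈ rankedBetween π y x, Qq V x y c + ∑ c ∈ rankedAfter π x, Qq V x y c) := by
    have hQ : ∀ c ∈ (rankedAfter π y).erase x,
        (firstCount V {x, y, c} x : ℤ) - firstCount V {x, y, c} y = Qq V x y c := fun c hc => by
      obtain ⟨hcx, hyc⟩ := mem_erase.1 hc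
      rw [mem_rankedAfter] at hyc
      exact firstCount_sub_firstCount_eq_Qq hV hxy (Ne.symm hcx) fun h => by subst h; omega
    rw [firstCount_sub_firstCount_eq_del hV hxy, sum_congr rfl hQ,
      hπ.rankedAfter_erase_eq_union hyx, sum_union (disjoint_rankedBetween_rankedAfter π y x)]
  have hG₂ : ((firstCount V {y, x} y : ℤ) - firstCount V {y, x} x) +
      ∑ c ∈ rankedAfter π x, ((firstCount V {y, x, c} y : ℤ) - firstCount V {y, x, c} x) =
      -(del V x y + ∑ c ∈ rankedAfter π x, Qq V x y c) := by
    rw [pair_comm y x, ← neg_sub, firstCount_sub_firstCount_eq_del hV hxy, neg_add,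
      ← sum_neg_distrib]
    refine congrArg _ (sum_congr rfl fun c hc => ?_)
    rw [mem_rankedAfter] at hc
    rw [insert_comm y x, ← neg_sub, firstCount_sub_firstCount_eq_Qq hV hxy
      (fun h => by subst h; omega) (fun h => by subst h; omega)]
  have hB : ∑ b ∈ rankedBetween π y x, (((firstCount V {x, b} x : ℤ) - firstCount V {x, b} b) +
        ∑ c ∈ (rankedAfter π b).erase x,
          ((firstCount V {x, b, c} x : ℤ) - firstCount V {x, b, c} b)) -
      ∑ b ∈ rankedBetween π y x, (((firstCount V {y, b} y : ℤ) - firstCount V {y, b} b) +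
        ∑ c ∈ rankedAfter π b, ((firstCount V {y, b, c} y : ℤ) - firstCount V {y, b, c} b)) =
      ∑ b ∈ rankedBetween π y x, (Pq V x y b - ∑ c ∈ (rankedAfter π b).erase x, Ss V y x b c) -
        ∑ b ∈ rankedBetween π y x, Qq V x y b := by
    rw [← sum_sub_distrib, ← sum_sub_distrib]
    exact sum_congr rfl fun b hb => (sum_firstCount_sub_sum_firstCount hV hb).trans (by ring)
  have e₁ := d3V_sub_d3V_moveBefore hV hπ hyx
  have e₂ := d3V_moveAfter_sub_d3V hV hπ hyx
  rw [sum_insert fun h => lt_irrefl _ (mem_rankedBetween.1 h).1] at e₁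
  rw [sum_insert fun h => lt_irrefl _ (mem_rankedBetween.1 h).2] at e₂
  linarith

theorem neg_max_le_sub_sum {ι : Type*} (P : ℤ) (f : ι → ℤ) {U W : Finset ι} (hUW : U ⊆ W) :
    -max 0 (-P + ∑ t ∈ W, max 0 (f t)) ≤ P - ∑ t ∈ U, f t := by
  have hU : ∑ t ∈ U, f t ≤ ∑ t ∈ W, max 0 (f t) :=
    (sum_le_sum fun t _ => le_max_right 0 (f t)).trans
      (sum_le_sum_of_subset_of_nonneg hUW fun _ _ _ => le_max_left _ _)
  have := le_max_right 0 (-P + ∑ t ∈ W, max 0 (f t))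
  linarith

theorem d3V_moveBefore_add_d3V_moveAfter_le (hV : ∀ v ∈ V, IsRanking v) (hπ : IsRanking π)
    (hyx : π.idxOf y < π.idxOf x) (hQ : ∀ z : α, z ≠ x → z ≠ y → 0 ≤ Qq V x y z)
    (hsum : 2 * del V x y ≥ ∑ z ∈ (univ : Finset α) \ {x, y},
      max 0 (- Pq V x y z + ∑ t ∈ (univ : Finset α) \ {x, y, z}, max 0 (Ss V y x z t))) :
    (d3V (moveBefore π x y) V : ℤ) + d3V (moveAfter π x y) V ≤ 2 * d3V π V := by
  have hid := two_mul_d3V_sub_d3V_moveBefore_sub_d3V_moveAfter hV hπ hyx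
  have hC : 0 ≤ ∑ c ∈ rankedAfter π x, Qq V x y c := sum_nonneg fun c hc => by
    rw [mem_rankedAfter] at hc
    exact hQ c (fun h => by subst h; omega) (fun h => by subst h; omega)
  have hBsub : rankedBetween π y x ⊆ univ \ {x, y} := fun b hb => by
    rw [mem_rankedBetween] at hb
    simp only [mem_sdiff, mem_univ, mem_insert, mem_singleton, true_and, not_or]
    exact ⟨fun h => by subst h; omega, fun h => by subst h; omega⟩
  have hBle := sum_le_sum_of_subset_of_nonneg (f := fun z =>
    max 0 (- Pq V x y z + ∑ t ∈ (univ : Finset α) \ {x, y, z}, max 0 (Ss V y x z t)))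
    hBsub fun _ _ _ => le_max_left _ _
  have hB := sum_le_sum fun b (hb : b ∈ rankedBetween π y x) =>
    neg_max_le_sub_sum (Pq V x y b) (Ss V y x b) (U := (rankedAfter π b).erase x)
      (W := univ \ {x, y, b}) fun c hc => by
      obtain ⟨hcx, hbc⟩ := mem_erase.1 hc
      rw [mem_rankedAfter] at hbc
      rw [mem_rankedBetween] at hb
      simp only [mem_sdiff, mem_univ, mem_insert, mem_singleton, true_and, not_or]
      exact ⟨hcx, fun h => by subst h; omega, fun h => by subst h; omega⟩
  rw [sum_neg_distrib] at hB
  linarith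

end MajorOrder

theorem stmt19_general [Fintype α] [DecidableEq α]
    (V : Multiset (List α)) (hV : ∀ v ∈ V, IsRanking v)
    (x y : α) (hxy : x ≠ y)
    (hQ : ∀ z : α, z ≠ x → z ≠ y → 0 ≤ Qq V x y z)
    (hsum : 2 * del V x y ≥ ∑ z ∈ (Finset.univ : Finset α) \ {x, y},
      max 0 (- Pq V x y z + ∑ t ∈ (Finset.univ : Finset α) \ {x, y, z}, max 0 (Ss V y x z t))) :
    ∃ π : List α, IsMedian3 V π ∧ π.idxOf x < π.idxOf y := by
  obtain ⟨π, hπ⟩ := exists_isMedian3 V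
  by_cases hxy' : π.idxOf x < π.idxOf y
  · exact ⟨π, hπ, hxy'⟩
  have hyx : π.idxOf y < π.idxOf x := (hπ.1.idxOf_lt_or_gt hxy).resolve_left hxy'
  have hle := d3V_moveBefore_add_d3V_moveAfter_le hV hπ.1 hyx hQ hsum
  rcases le_or_gt (d3V (moveBefore π x y) V) (d3V π V) with h | h
  · exact ⟨_, hπ.of_d3V_le isRanking_moveBefore h, idxOf_moveBefore_self_lt hπ.1 hxy⟩
  · exact ⟨_, hπ.of_d3V_le isRanking_moveAfter (by omega), idxOf_moveAfter_self_lt hπ.1 hxy⟩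

theorem stmt19 [Fintype α] [DecidableEq α]
    (V : Multiset (List α)) (hV : ∀ v ∈ V, IsRanking v)
    (x y : α) (hxy : x ≠ y)
    (hmaj : 0 ≤ del V x y)
    (hQ : ∀ z : α, z ≠ x → z ≠ y → 0 ≤ Qq V x y z)
    (hsum : 2 * del V x y ≥ ∑ z ∈ (Finset.univ : Finset α) \ {x, y},
      max 0 (- Pq V x y z + ∑ t ∈ (Finset.univ : Finset α) \ {x, y, z}, max 0 (Ss V y x z t))) :
    ∃ π : List α, IsMedian3 V π ∧ π.idxOf x < π.idxOf y :=
  stmt19_general V hV x y hxy hQ hsum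
end
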